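/- arXiv:2108.07680 — 4 statements merged into one kernel-verified Lean document; each statement's English description precedes it below -/
import Mathlib

section
/- Let r ≥ 2 be an integer. For all functions f₁, f₂, f₃ : Fin r → {-1, 1} such that f₁ takes the value -1 at exactly one index, f₂ takes the value -1 at exactly one index, and f₃ takes the value 1 at exactly one index, there exist indices j ≠ j' in Fin r such that the triangles T(f₁ j, f₂ j, f₃ j) and T(f₁ j', f₂ j', f₃ j') are disjoint. -/
/-- The (possibly degenerate) triangle in the Euclidean plane induced by the three
lines `x = l1`, `y = l2`, `x = l3 * y`, for `l1, l2, l3 ∈ {-1, 1}`: the convex hull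
of the three pairwise "intersection" points `(l1, l2)`, `(l1, l3 * l1)`, `(l3 * l2, l2)`. -/
noncomputable def inducedTriangle (l1 l2 l3 : ℝ) : Set (EuclideanSpace ℝ (Fin 2)) :=
  convexHull ℝ
    {(!₂[l1, l2] : EuclideanSpace ℝ (Fin 2)), !₂[l1, l3 * l1], !₂[l3 * l2, l2]}

lemma sep_disjoint (S S' : Set (EuclideanSpace ℝ (Fin 2))) (a b c : ℝ)
    (h : ∀ p ∈ S, a * p 0 + b * p 1 ≤ c)
    (h' : ∀ p ∈ S', c < a * p 0 + b * p 1) :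
    Disjoint (convexHull ℝ S) (convexHull ℝ S') := by
  have lin : IsLinearMap ℝ (fun p : EuclideanSpace ℝ (Fin 2) => a * p 0 + b * p 1) := by
    constructor <;> intros <;>
      simp [PiLp.add_apply, PiLp.smul_apply, smul_eq_mul] <;> ring
  have hsub : convexHull ℝ S ⊆ {p | a * p 0 + b * p 1 ≤ c} :=
    convexHull_min h (convex_halfSpace_le lin c)
  have hsub' : convexHull ℝ S' ⊆ {p | c < a * p 0 + b * p 1} :=
    convexHull_min h' (convex_halfSpace_gt lin c)
  rw [Set.disjoint_left]
  intro x hx hx'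
  have g1 := hsub hx
  have g2 := hsub' hx'
  simp only [Set.mem_setOf_eq] at g1 g2
  linarith

lemma disj_case1 : Disjoint (inducedTriangle (-1) (-1) 1) (inducedTriangle 1 1 (-1)) := by
  unfold inducedTriangle
  refine sep_disjoint _ _ 1 1 (-1) ?_ ?_ <;>
  · intro p hp
    simp only [Set.mem_insert_iff, Set.mem_singleton_iff] at hp
    rcases hp with rfl | rfl | rfl <;> norm_num

lemma disj_case2 : Disjoint (inducedTriangle (-1) (-1) (-1)) (inducedTriangle 1 1 1) := by
  unfold inducedTriangle
  refine sep_disjoint _ _ 1 1 1 ?_ ?_ <;>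
  · intro p hp
    simp only [Set.mem_insert_iff, Set.mem_singleton_iff] at hp
    rcases hp with rfl | rfl | rfl <;> norm_num

lemma disj_case3 : Disjoint (inducedTriangle (-1) 1 1) (inducedTriangle 1 (-1) (-1)) := by
  unfold inducedTriangle
  refine sep_disjoint _ _ 1 (-1) 1 ?_ ?_ <;>
  · intro p hp
    simp only [Set.mem_insert_iff, Set.mem_singleton_iff] at hp
    rcases hp with rfl | rfl | rfl <;> norm_num

lemma disj_case4 : Disjoint (inducedTriangle 1 (-1) 1) (inducedTriangle (-1) 1 (-1)) := by
  unfold inducedTriangle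
  refine sep_disjoint _ _ (-1) 1 1 ?_ ?_ <;>
  · intro p hp
    simp only [Set.mem_insert_iff, Set.mem_singleton_iff] at hp
    rcases hp with rfl | rfl | rfl <;> norm_num

lemma disj_case5 : Disjoint (inducedTriangle (-1) 1 (-1)) (inducedTriangle 1 (-1) (-1)) := by
  unfold inducedTriangle
  refine sep_disjoint _ _ 1 (-1) 1 ?_ ?_ <;>
  · intro p hp
    simp only [Set.mem_insert_iff, Set.mem_singleton_iff] at hp
    rcases hp with rfl | rfl | rfl <;> norm_num

/-- Every colorful partition of the three families of `r` lines
(`r-1` copies of `x = 1` and one `x = -1`; `r-1` copies of `y = 1` and one `y = -1`;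
`r-1` copies of `x = -y` and one `x = y`) has two parts whose induced triangles are
disjoint. -/
theorem stmt0 (r : ℕ) (hr : 2 ≤ r) (f₁ f₂ f₃ : Fin r → ℝ)
    (hv₁ : ∀ j, f₁ j = 1 ∨ f₁ j = -1)
    (hv₂ : ∀ j, f₂ j = 1 ∨ f₂ j = -1)
    (hv₃ : ∀ j, f₃ j = 1 ∨ f₃ j = -1)
    (h₁ : ∃! j, f₁ j = -1) (h₂ : ∃! j, f₂ j = -1) (h₃ : ∃! j, f₃ j = 1) :
    ∃ j j' : Fin r, j ≠ j' ∧
      Disjoint (inducedTriangle (f₁ j) (f₂ j) (f₃ j))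
        (inducedTriangle (f₁ j') (f₂ j') (f₃ j')) := by
  obtain ⟨a, ha1, hau⟩ := h₁
  obtain ⟨b, hb1, hbu⟩ := h₂
  obtain ⟨c, hc1, hcu⟩ := h₃
  have hf1 : ∀ j, j ≠ a → f₁ j = 1 := fun j hj =>
    (hv₁ j).resolve_right (fun h => hj (hau j h))
  have hf2 : ∀ j, j ≠ b → f₂ j = 1 := fun j hj =>
    (hv₂ j).resolve_right (fun h => hj (hbu j h))
  have hf3 : ∀ j, j ≠ c → f₃ j = -1 := fun j hj =>
    (hv₃ j).resolve_left (fun h => hj (hcu j h))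
  by_cases hab : a = b
  · by_cases hac : a = c
    · -- a = b = c : point (-1,-1) vs generic big triangle
      have : Nontrivial (Fin r) := Fin.nontrivial_iff_two_le.mpr hr
      obtain ⟨k, hk⟩ := exists_ne a
      refine ⟨a, k, Ne.symm hk, ?_⟩
      rw [ha1, show f₂ a = -1 from hab ▸ hb1, show f₃ a = 1 from hac ▸ hc1,
        hf1 k hk, hf2 k (hab ▸ hk), hf3 k (hac ▸ hk)]
      exact disj_case1
    · -- a = b ≠ c : triangle at a vs point (1,1) at c
      refine ⟨a, c, hac, ?_⟩
      rw [ha1, show f₂ a = -1 from hab ▸ hb1, hf3 a hac,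
        hf1 c (fun h => hac h.symm),
        hf2 c (hab ▸ (fun h : c = a => hac h.symm)), hc1]
      exact disj_case2
  · by_cases hac : a = c
    · -- a = c ≠ b : triangle at a vs point (1,-1) at b
      refine ⟨a, b, hab, ?_⟩
      rw [ha1, hf2 a hab, show f₃ a = 1 from hac ▸ hc1,
        hf1 b (fun h => hab h.symm), hb1, hf3 b (hac ▸ (fun h => hab h.symm))]
      exact disj_case3
    · by_cases hbc : b = c
      · -- b = c ≠ a : triangle at b vs point (-1,1) at a
        refine ⟨b, a, fun h => hab h.symm, ?_⟩
        rw [hf1 b (fun h => hab h.symm), hb1, show f₃ b = 1 from hbc ▸ hc1,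
          ha1, hf2 a hab, hf3 a hac]
        exact disj_case4
      · -- all distinct : point (-1,1) at a vs point (1,-1) at b
        refine ⟨a, b, hab, ?_⟩
        rw [ha1, hf2 a hab, hf3 a hac,
          hf1 b (fun h => hab h.symm), hb1, hf3 b hbc]
        exact disj_case5
end

section
/- Let r ≥ 2 be an integer. For all functions f₁, f₂, f₃ : Fin r → {-1, 1} such that f₁ takes the value -1 at exactly one index, f₂ takes the value -1 at exactly one index, and f₃ takes the value 1 at exactly one index, there exist indices j ≠ j' in Fin r such that for every point p ∈ T(f₁ j, f₂ j, f₃ j) and every point q ∈ T(f₁ j', f₂ j', f₃ j') the Euclidean distance ‖p − q‖ is at least 1/√2. -/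
lemma isLinearMap_L (e1 e2 : ℝ) :
    IsLinearMap ℝ (fun p : EuclideanSpace ℝ (Fin 2) => e1 * p 0 + e2 * p 1) := by
  constructor
  · intro x y
    show e1 * (x 0 + y 0) + e2 * (x 1 + y 1) = _
    ring
  · intro c x
    show e1 * (c * x 0) + e2 * (c * x 1) = c * _
    ring

lemma hull_le (e1 e2 t l1 l2 l3 : ℝ)
    (h1 : t ≤ e1 * l1 + e2 * l2) (h2 : t ≤ e1 * l1 + e2 * (l3 * l1))
    (h3 : t ≤ e1 * (l3 * l2) + e2 * l2) :
    ∀ p ∈ inducedTriangle l1 l2 l3, t ≤ e1 * p 0 + e2 * p 1 := by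
  intro p hp
  have hsub : inducedTriangle l1 l2 l3 ⊆
      {x : EuclideanSpace ℝ (Fin 2) | t ≤ e1 * x 0 + e2 * x 1} := by
    apply convexHull_min ?_ (convex_halfSpace_ge (isLinearMap_L e1 e2) t)
    intro x hx
    rcases hx with rfl | rfl | rfl <;> simpa using ‹_›
  exact hsub hp

lemma dist_lb (e1 e2 : ℝ) (he1 : |e1| ≤ 1) (he2 : |e2| ≤ 1)
    (p q : EuclideanSpace ℝ (Fin 2))
    (h : 2 ≤ (e1 * p 0 + e2 * p 1) - (e1 * q 0 + e2 * q 1)) :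
    1 / Real.sqrt 2 ≤ dist p q := by
  set d0 := p 0 - q 0 with hd0
  set d1 := p 1 - q 1 with hd1
  have hd : dist p q = Real.sqrt (d0 ^ 2 + d1 ^ 2) := by
    rw [EuclideanSpace.dist_eq, Fin.sum_univ_two]
    norm_num [hd0, hd1, Real.dist_eq, sq_abs]
  have h0 : |d0| ≤ dist p q := by
    rw [hd, ← Real.sqrt_sq_eq_abs]
    exact Real.sqrt_le_sqrt (by nlinarith [sq_nonneg d1])
  have h1 : |d1| ≤ dist p q := by
    rw [hd, ← Real.sqrt_sq_eq_abs]
    exact Real.sqrt_le_sqrt (by nlinarith [sq_nonneg d0])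
  have habs0 : e1 * d0 ≤ |d0| := by
    calc e1 * d0 ≤ |e1 * d0| := le_abs_self _
    _ = |e1| * |d0| := abs_mul _ _
    _ ≤ 1 * |d0| := by gcongr
    _ = |d0| := one_mul _
  have habs1 : e2 * d1 ≤ |d1| := by
    calc e2 * d1 ≤ |e2 * d1| := le_abs_self _
    _ = |e2| * |d1| := abs_mul _ _
    _ ≤ 1 * |d1| := by gcongr
    _ = |d1| := one_mul _
  have h2 : 2 ≤ e1 * d0 + e2 * d1 := by rw [hd0, hd1]; linarith [h]; 
  have hdist : 1 ≤ dist p q := by nlinarith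
  have hsqrt : 1 ≤ Real.sqrt 2 := by
    nlinarith [Real.sq_sqrt (show (0:ℝ) ≤ 2 by norm_num), Real.sqrt_nonneg 2]
  calc 1 / Real.sqrt 2 ≤ 1 := by
        rw [div_le_one (by linarith)]; exact hsqrt
  _ ≤ dist p q := hdist

lemma far (l1 l2 l3 m1 m2 m3 e1 e2 t : ℝ) (he1 : |e1| ≤ 1) (he2 : |e2| ≤ 1)
    (h11 : t ≤ e1 * l1 + e2 * l2) (h12 : t ≤ e1 * l1 + e2 * (l3 * l1))
    (h13 : t ≤ e1 * (l3 * l2) + e2 * l2)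
    (h21 : t ≤ -e1 * m1 + -e2 * m2 + (2 * t - 2)) 
    (h22 : t ≤ -e1 * m1 + -e2 * (m3 * m1) + (2 * t - 2))
    (h23 : t ≤ -e1 * (m3 * m2) + -e2 * m2 + (2 * t - 2)) :
    ∀ p ∈ inducedTriangle l1 l2 l3, ∀ q ∈ inducedTriangle m1 m2 m3,
      1 / Real.sqrt 2 ≤ dist p q := by
  intro p hp q hq
  have hLp := hull_le e1 e2 t l1 l2 l3 h11 h12 h13 p hp
  have hLq := hull_le (-e1) (-e2) (t - (2 * t - 2)) m1 m2 m3
    (by linarith) (by linarith) (by linarith) q hq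
  exact dist_lb e1 e2 he1 he2 p q (by linarith)

/-- Every colorful partition of the three families of `r` lines has two parts whose
induced triangles are at Euclidean distance at least `1 / √2` from each other. -/
theorem stmt1 (r : ℕ) (hr : 2 ≤ r) (f₁ f₂ f₃ : Fin r → ℝ)
    (hv₁ : ∀ j, f₁ j = 1 ∨ f₁ j = -1)
    (hv₂ : ∀ j, f₂ j = 1 ∨ f₂ j = -1)
    (hv₃ : ∀ j, f₃ j = 1 ∨ f₃ j = -1)
    (h₁ : ∃! j, f₁ j = -1) (h₂ : ∃! j, f₂ j = -1) (h₃ : ∃! j, f₃ j = 1) :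
    ∃ j j' : Fin r, j ≠ j' ∧
      ∀ p ∈ inducedTriangle (f₁ j) (f₂ j) (f₃ j),
        ∀ q ∈ inducedTriangle (f₁ j') (f₂ j') (f₃ j'),
          1 / Real.sqrt 2 ≤ dist p q := by
  obtain ⟨a, ha, ha'⟩ := h₁
  obtain ⟨b, hb, hb'⟩ := h₂
  obtain ⟨c, hc, hc'⟩ := h₃
  have val1 : ∀ j, j ≠ a → f₁ j = 1 :=
    fun j hj => (hv₁ j).resolve_right fun h => hj (ha' j h)
  have val2 : ∀ j, j ≠ b → f₂ j = 1 :=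
    fun j hj => (hv₂ j).resolve_right fun h => hj (hb' j h)
  have val3 : ∀ j, j ≠ c → f₃ j = -1 :=
    fun j hj => (hv₃ j).resolve_left fun h => hj (hc' j h)
  by_cases hab : a = b
  · by_cases hac : a = c
    · -- a = b = c : triangle H at a, generic A elsewhere
      have : Nontrivial (Fin r) :=
        ⟨⟨0, by omega⟩, ⟨1, by omega⟩, by simp [Fin.ext_iff]⟩
      obtain ⟨j', hj'⟩ := exists_ne a
      refine ⟨a, j', fun h => hj' h.symm, ?_⟩
      have h2a : f₂ a = -1 := by rw [hab]; exact hb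
      have h3a : f₃ a = 1 := by rw [hac]; exact hc
      rw [ha, h2a, h3a, val1 j' hj', val2 j' (hab ▸ hj'), val3 j' (hac ▸ hj')]
      apply far (-1) (-1) 1 1 1 (-1) (-1) (-1) 2 <;> norm_num
    · -- a = b ≠ c : B at c vs E at a
      refine ⟨c, a, fun h => hac h.symm, ?_⟩
      have h2a : f₂ a = -1 := by rw [hab]; exact hb
      rw [val1 c (fun h => hac h.symm), val2 c (fun h => hac (hab ▸ h.symm)), hc,
        ha, h2a, val3 a hac]
      apply far 1 1 1 (-1) (-1) (-1) 1 1 2 <;> norm_num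
  · by_cases hac : a = c
    · -- a = c ≠ b : D at b vs F at a
      have hbc : b ≠ c := fun h => hab (hac.trans h.symm)
      refine ⟨b, a, fun h => hab h.symm, ?_⟩
      have h3a : f₃ a = 1 := by rw [hac]; exact hc
      rw [val1 b (fun h => hab h.symm), hb, val3 b hbc, ha, val2 a hab, h3a]
      apply far 1 (-1) (-1) (-1) 1 1 1 (-1) 2 <;> norm_num
    · -- a ≠ b, a ≠ c : C at a vs (D or G) at b
      refine ⟨a, b, hab, ?_⟩
      rw [ha, val2 a hab, val3 a hac, val1 b (fun h => hab h.symm), hb]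
      rcases hv₃ b with h3b | h3b <;> rw [h3b] <;>
        · apply far (-1) 1 (-1) 1 (-1) _ (-1) 1 2 <;> norm_num
end

section
/- Let d ≥ 3 and r ≥ 2 be integers and let ε be a real number with 0 < ε < 1/(2√2·(d−2)). For all functions f₁, …, f_{d+1} : Fin r → {-1, 1}, each taking the value −1 at exactly one index, there exist indices j ≠ j' in Fin r such that the simplices Δ_ε(f₁ j, …, f_{d+1} j) and Δ_ε(f₁ j', …, f_{d+1} j') are disjoint. -/
/-- For `lam : Fin (d+1) → ℝ` with values in `{-1, 1}`, the `i`-th of the `d+1`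
hyperplanes in `ℝ^d`: for `i < d` (0-indexed) the hyperplane `xᵢ = lam i`, and for
`i = d` the hyperplane `x₁ + lam(d+1) ⬝ x₂ + ε (x₃ + ⋯ + x_d) = 0` (1-indexed
coordinates). -/
def hyperplaneOf (d : ℕ) (ε : ℝ) (lam : Fin (d + 1) → ℝ) (i : Fin (d + 1)) :
    Set (Fin d → ℝ) :=
  if h : (i : ℕ) < d then {x | x ⟨i, h⟩ = lam i}
  else {x | ∑ m : Fin d,
      (if (m : ℕ) = 0 then 1 else if (m : ℕ) = 1 then lam i else ε) * x m = 0}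

/-- The (possibly degenerate) simplex induced by the `d+1` hyperplanes: the convex
hull of the points obtained as the common point of all hyperplanes but one. -/
noncomputable def simplexOf (d : ℕ) (ε : ℝ) (lam : Fin (d + 1) → ℝ) :
    Set (Fin d → ℝ) :=
  convexHull ℝ
    {x | ∃ k : Fin (d + 1), ∀ i : Fin (d + 1), i ≠ k → x ∈ hyperplaneOf d ε lam i}

private def lf (d : ℕ) (ε c : ℝ) (x : Fin d → ℝ) : ℝ :=
  ∑ m : Fin d, (if (m : ℕ) = 0 then 1 else if (m : ℕ) = 1 then c else ε) * x m

private lemma lf_linear (d : ℕ) (ε c s : ℝ) :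
    IsLinearMap ℝ (fun x : Fin d → ℝ => s * lf d ε c x) := by
  constructor
  · intro x y
    simp only [lf, Pi.add_apply, mul_add, Finset.mul_sum, ← Finset.sum_add_distrib]
    try exact Finset.sum_congr rfl fun m _ => by ring
  · intro r x
    simp only [lf, Pi.smul_apply, smul_eq_mul, Finset.mul_sum]
    exact Finset.sum_congr rfl fun m _ => by ring

private lemma lf_eq (d : ℕ) (hd : 3 ≤ d) (ε c : ℝ) (x : Fin d → ℝ) :
    lf d ε c x = x ⟨0, by omega⟩ + c * x ⟨1, by omega⟩ +
      ε * ∑ m ∈ Finset.univ.filter (fun m : Fin d => 1 < (m : ℕ)), x m := by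
  have huniv : (Finset.univ : Finset (Fin d)) =
      insert ⟨0, by omega⟩ (insert ⟨1, by omega⟩
        (Finset.univ.filter (fun m : Fin d => 1 < (m : ℕ)))) := by
    ext m; simp [Fin.ext_iff]; omega
  have hsum : ∑ m ∈ Finset.univ.filter (fun m : Fin d => 1 < (m : ℕ)),
      (if (m : ℕ) = 0 then (1:ℝ) else if (m : ℕ) = 1 then c else ε) * x m
      = ∑ m ∈ Finset.univ.filter (fun m : Fin d => 1 < (m : ℕ)), ε * x m := by
    refine Finset.sum_congr rfl fun m hm => ?_
    simp only [Finset.mem_filter] at hm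
    rw [if_neg (by omega), if_neg (by omega)]
  rw [lf]
  conv_lhs => rw [huniv]
  rw [Finset.sum_insert (by simp [Fin.ext_iff]), Finset.sum_insert (by simp),
    hsum, ← Finset.mul_sum]
  norm_num
  ring

private lemma lf_sub (d : ℕ) (hd : 3 ≤ d) (ε c c' : ℝ) (x : Fin d → ℝ) :
    lf d ε c x - lf d ε c' x = (c - c') * x ⟨1, by omega⟩ := by
  rw [lf_eq d hd ε c x, lf_eq d hd ε c' x]; ring

private lemma abs_sum_le (d : ℕ) (hd : 3 ≤ d) (y : Fin d → ℝ)
    (hy : ∀ m ∈ Finset.univ.filter (fun m : Fin d => 1 < (m : ℕ)), |y m| = 1) :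
    |∑ m ∈ Finset.univ.filter (fun m : Fin d => 1 < (m : ℕ)), y m| ≤ (d : ℝ) - 2 := by
  have hset : Finset.univ.filter (fun m : Fin d => 1 < (m : ℕ)) =
      (Finset.univ : Finset (Fin d)) \ {(⟨0, by omega⟩ : Fin d), ⟨1, by omega⟩} := by
    ext m; simp [Fin.ext_iff]; omega
  have hcard : (Finset.univ.filter (fun m : Fin d => 1 < (m : ℕ))).card = d - 2 := by
    rw [hset, Finset.card_sdiff_of_subset (Finset.subset_univ _), Finset.card_univ, Fintype.card_fin,
      Finset.card_insert_of_notMem (by simp [Fin.ext_iff]), Finset.card_singleton]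
  calc |∑ m ∈ Finset.univ.filter (fun m : Fin d => 1 < (m : ℕ)), y m|
      ≤ ∑ m ∈ Finset.univ.filter (fun m : Fin d => 1 < (m : ℕ)), |y m| :=
        Finset.abs_sum_le_sum_abs _ _
    _ = ∑ m ∈ Finset.univ.filter (fun m : Fin d => 1 < (m : ℕ)), 1 :=
        Finset.sum_congr rfl hy
    _ = ((d - 2 : ℕ) : ℝ) := by rw [Finset.sum_const, hcard]; simp
    _ = (d : ℝ) - 2 := by push_cast [Nat.cast_sub (by omega : 2 ≤ d)]; ring

private lemma val_one_fin (d : ℕ) (hd : 3 ≤ d) : ((1 : Fin (d + 1)) : ℕ) = 1 := by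
  rw [Fin.val_one', Nat.mod_eq_of_lt (by omega)]

private lemma simplex_subset_neg (d : ℕ) (hd : 3 ≤ d) (ε : ℝ) (hε0 : 0 < ε)
    (hεd : ε * ((d : ℝ) - 2) < 1)
    (lam : Fin (d + 1) → ℝ) (hval : ∀ i, lam i = 1 ∨ lam i = -1)
    (ht : lam 0 + lam (Fin.last d) * lam 1 = 0) :
    simplexOf d ε lam ⊆ {x | -(lam 0) * lf d ε (-(lam (Fin.last d))) x < 0} := by
  rw [simplexOf]
  refine convexHull_min ?_ (convex_halfSpace_lt (lf_linear d ε _ _) 0)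
  rintro x ⟨k, hk⟩
  have hcoord : ∀ (i : Fin (d + 1)) (h : (i : ℕ) < d), i ≠ k → x ⟨i, h⟩ = lam i := by
    intro i h hik
    have := hk i hik
    rwa [hyperplaneOf, dif_pos h] at this
  have hv0 : lam 0 = 1 ∨ lam 0 = -1 := hval 0
  have hv1 : lam 1 = 1 ∨ lam 1 = -1 := hval 1
  have hvl : lam (Fin.last d) = 1 ∨ lam (Fin.last d) = -1 := hval (Fin.last d)
  show -(lam 0) * lf d ε (-(lam (Fin.last d))) x < 0
  by_cases hkl : k = Fin.last d
  · -- all coordinate constraints hold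
    have hx : ∀ m : Fin d, x m = lam m.castSucc := by
      intro m
      have h : ((m.castSucc : Fin (d + 1)) : ℕ) < d := by simpa using m.isLt
      have := hcoord m.castSucc h (by rw [hkl]; exact (Fin.castSucc_lt_last m).ne)
      simpa using this
    have e0 : ((⟨0, by omega⟩ : Fin d).castSucc) = (0 : Fin (d + 1)) := by
      apply Fin.ext; simp
    have e1 : ((⟨1, by omega⟩ : Fin d).castSucc) = (1 : Fin (d + 1)) := by
      apply Fin.ext; rw [Fin.coe_castSucc, val_one_fin d hd]
    have h0 : x ⟨0, by omega⟩ = lam 0 := by rw [hx ⟨0, by omega⟩, e0]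
    have h1 : x ⟨1, by omega⟩ = lam 1 := by rw [hx ⟨1, by omega⟩, e1]
    have hu : |∑ m ∈ Finset.univ.filter (fun m : Fin d => 1 < (m : ℕ)), x m| ≤ (d : ℝ) - 2 := by
      refine abs_sum_le d hd _ fun m _ => ?_
      rw [hx m]
      rcases hval m.castSucc with h | h <;> rw [h] <;> norm_num
    set U := ∑ m ∈ Finset.univ.filter (fun m : Fin d => 1 < (m : ℕ)), x m with hU
    have hb1 : ε * U < 1 := by
      have := mul_le_mul_of_nonneg_left (abs_le.mp hu).2 hε0.le
      linarith
    have hb2 : -1 < ε * U := by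
      have := mul_le_mul_of_nonneg_left (abs_le.mp hu).1 hε0.le
      nlinarith
    rw [lf_eq d hd, h0, h1, ← hU]
    rcases hv0 with h | h <;> rcases hv1 with h' | h' <;> rcases hvl with h'' | h'' <;>
      simp only [h, h', h''] at ht ⊢ <;> linarith
  · -- the last hyperplane constraint holds
    have hE : lf d ε (lam (Fin.last d)) x = 0 := by
      have := hk _ (Ne.symm hkl)
      rw [hyperplaneOf, dif_neg (by simp)] at this
      exact this
    have hlf : lf d ε (-(lam (Fin.last d))) x =
        (-(lam (Fin.last d)) - lam (Fin.last d)) * x ⟨1, by omega⟩ := by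
      have := lf_sub d hd ε (-(lam (Fin.last d))) (lam (Fin.last d)) x
      rw [hE] at this
      linarith
    by_cases hk1 : (k : ℕ) = 1
    · -- need to solve for x 1 from the hyperplane equation
      have h0 : x ⟨0, by omega⟩ = lam 0 := by
        have h : ((0 : Fin (d + 1)) : ℕ) < d := by simp only [Fin.val_zero]; omega
        have h2 := hcoord 0 h (by
          intro hc; rw [← hc] at hk1; simp at hk1)
        rwa [show (⟨((0 : Fin (d + 1)) : ℕ), h⟩ : Fin d) = ⟨0, by omega⟩ by
          apply Fin.ext; simp] at h2
      have hxA : ∀ m ∈ Finset.univ.filter (fun m : Fin d => 1 < (m : ℕ)),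
          x m = lam m.castSucc := by
        intro m hm
        simp only [Finset.mem_filter] at hm
        have h : ((m.castSucc : Fin (d + 1)) : ℕ) < d := by simpa using m.isLt
        have := hcoord m.castSucc h (by
          intro hc; rw [← hc] at hk1; simp at hk1; omega)
        simpa using this
      have hu : |∑ m ∈ Finset.univ.filter (fun m : Fin d => 1 < (m : ℕ)), x m| ≤ (d : ℝ) - 2 := by
        refine abs_sum_le d hd _ fun m hm => ?_
        rw [hxA m hm]
        rcases hval m.castSucc with h | h <;> rw [h] <;> norm_num
      set U := ∑ m ∈ Finset.univ.filter (fun m : Fin d => 1 < (m : ℕ)), x m with hU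
      have hb1 : ε * U < 1 := by
        have := mul_le_mul_of_nonneg_left (abs_le.mp hu).2 hε0.le
        linarith
      have hb2 : -1 < ε * U := by
        have := mul_le_mul_of_nonneg_left (abs_le.mp hu).1 hε0.le
        nlinarith
      have hEq : lam 0 + lam (Fin.last d) * x ⟨1, by omega⟩ + ε * U = 0 := by
        rw [← h0, ← hE, lf_eq d hd, hU]
      rw [hlf]
      rcases hv0 with h | h <;> rcases hv1 with h' | h' <;> rcases hvl with h'' | h'' <;>
        simp only [h, h', h''] at ht hEq ⊢ <;> linarith
    · -- x 1 = lam 1 directly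
      have h1 : x ⟨1, by omega⟩ = lam 1 := by
        have h : ((1 : Fin (d + 1)) : ℕ) < d := by rw [val_one_fin d hd]; omega
        have h2 := hcoord 1 h (by
          intro hc; rw [← hc, val_one_fin d hd] at hk1
          exact hk1 rfl)
        rwa [show (⟨((1 : Fin (d + 1)) : ℕ), h⟩ : Fin d) = ⟨1, by omega⟩ by
          apply Fin.ext; simp [val_one_fin d hd]; omega] at h2
      rw [hlf, h1]
      rcases hv0 with h | h <;> rcases hv1 with h' | h' <;> rcases hvl with h'' | h'' <;>
        simp only [h, h', h''] at ht ⊢ <;> linarith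

private lemma simplex_subset_pos (d : ℕ) (hd : 3 ≤ d) (ε : ℝ) (hε0 : 0 < ε)
    (hεd : ε * ((d : ℝ) - 2) < 1)
    (lam : Fin (d + 1) → ℝ) (hval : ∀ i, lam i = 1 ∨ lam i = -1)
    (s : ℝ) (hs1 : s = 1 ∨ s = -1)
    (hs : s * (lam 0 + lam (Fin.last d) * lam 1) = 2) :
    simplexOf d ε lam ⊆ {x | 0 ≤ s * lf d ε (lam (Fin.last d)) x} := by
  rw [simplexOf]
  refine convexHull_min ?_ (convex_halfSpace_ge (lf_linear d ε _ _) 0)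
  rintro x ⟨k, hk⟩
  show 0 ≤ s * lf d ε (lam (Fin.last d)) x
  by_cases hkl : k = Fin.last d
  · have hcoord : ∀ (i : Fin (d + 1)) (h : (i : ℕ) < d), i ≠ k → x ⟨i, h⟩ = lam i := by
      intro i h hik
      have := hk i hik
      rwa [hyperplaneOf, dif_pos h] at this
    have hx : ∀ m : Fin d, x m = lam m.castSucc := by
      intro m
      have h : ((m.castSucc : Fin (d + 1)) : ℕ) < d := by simpa using m.isLt
      have := hcoord m.castSucc h (by rw [hkl]; exact (Fin.castSucc_lt_last m).ne)
      simpa using this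
    have e0 : ((⟨0, by omega⟩ : Fin d).castSucc) = (0 : Fin (d + 1)) := by
      apply Fin.ext; simp
    have e1 : ((⟨1, by omega⟩ : Fin d).castSucc) = (1 : Fin (d + 1)) := by
      apply Fin.ext; rw [Fin.coe_castSucc, val_one_fin d hd]
    have h0 : x ⟨0, by omega⟩ = lam 0 := by rw [hx ⟨0, by omega⟩, e0]
    have h1 : x ⟨1, by omega⟩ = lam 1 := by rw [hx ⟨1, by omega⟩, e1]
    have hu : |∑ m ∈ Finset.univ.filter (fun m : Fin d => 1 < (m : ℕ)), x m| ≤ (d : ℝ) - 2 := by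
      refine abs_sum_le d hd _ fun m _ => ?_
      rw [hx m]
      rcases hval m.castSucc with h | h <;> rw [h] <;> norm_num
    set U := ∑ m ∈ Finset.univ.filter (fun m : Fin d => 1 < (m : ℕ)), x m with hU
    have hb1 : ε * U < 1 := by
      have := mul_le_mul_of_nonneg_left (abs_le.mp hu).2 hε0.le
      linarith
    have hb2 : -1 < ε * U := by
      have := mul_le_mul_of_nonneg_left (abs_le.mp hu).1 hε0.le
      nlinarith
    rw [lf_eq d hd, h0, h1, ← hU]
    rcases hs1 with hsv | hsv <;> rcases hval 0 with h | h <;> rcases hval 1 with h' | h' <;>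
      rcases hval (Fin.last d) with h'' | h'' <;>
      simp only [hsv, h, h', h''] at hs ⊢ <;> linarith
  · have hE : lf d ε (lam (Fin.last d)) x = 0 := by
      have := hk _ (Ne.symm hkl)
      rw [hyperplaneOf, dif_neg (by simp)] at this
      exact this
    rw [hE]
    simp

private lemma disj_neg_pos (d : ℕ) (hd : 3 ≤ d) (ε : ℝ) (hε0 : 0 < ε)
    (hεd : ε * ((d : ℝ) - 2) < 1)
    (lam mu : Fin (d + 1) → ℝ) (hvl : ∀ i, lam i = 1 ∨ lam i = -1)
    (hvm : ∀ i, mu i = 1 ∨ mu i = -1)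
    (ht : lam 0 + lam (Fin.last d) * lam 1 = 0)
    (hc : mu (Fin.last d) = -(lam (Fin.last d)))
    (hs : -(lam 0) * (mu 0 + mu (Fin.last d) * mu 1) = 2) :
    Disjoint (simplexOf d ε lam) (simplexOf d ε mu) := by
  rw [Set.disjoint_left]
  intro a ha hb
  have hs1 : -(lam 0) = 1 ∨ -(lam 0) = -1 := by
    rcases hvl 0 with h | h <;> rw [h] <;> norm_num
  have h1 := simplex_subset_neg d hd ε hε0 hεd lam hvl ht ha
  have h2 := simplex_subset_pos d hd ε hε0 hεd mu hvm (-(lam 0)) hs1 hs hb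
  rw [hc] at h2
  simp only [Set.mem_setOf_eq] at h1 h2
  linarith

private lemma disj_neg_neg (d : ℕ) (hd : 3 ≤ d) (ε : ℝ) (hε0 : 0 < ε)
    (hεd : ε * ((d : ℝ) - 2) < 1)
    (lam mu : Fin (d + 1) → ℝ) (hvl : ∀ i, lam i = 1 ∨ lam i = -1)
    (hvm : ∀ i, mu i = 1 ∨ mu i = -1)
    (htl : lam 0 + lam (Fin.last d) * lam 1 = 0)
    (htm : mu 0 + mu (Fin.last d) * mu 1 = 0)
    (hc : mu (Fin.last d) = lam (Fin.last d))
    (hs : mu 0 = -(lam 0)) :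
    Disjoint (simplexOf d ε lam) (simplexOf d ε mu) := by
  rw [Set.disjoint_left]
  intro a ha hb
  have h1 := simplex_subset_neg d hd ε hε0 hεd lam hvl htl ha
  have h2 := simplex_subset_neg d hd ε hε0 hεd mu hvm htm hb
  rw [hc, hs] at h2
  simp only [Set.mem_setOf_eq] at h1 h2
  nlinarith [h1, h2]

/-- For `d ≥ 3`, `r ≥ 2` and `0 < ε < 1/(2√2 (d-2))`, every colorful partition of the
`d+1` families of `r` hyperplanes (the `i`-th family being `r-1` copies of `xᵢ = 1`
and one copy of `xᵢ = -1` for `i ≤ d`, and the last family `r-1` copies of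
`x₁ + x₂ + ε(x₃ + ⋯ + x_d) = 0` and one copy of `x₁ - x₂ + ε(x₃ + ⋯ + x_d) = 0`)
has two parts whose induced simplices are disjoint. -/
theorem stmt2 (d r : ℕ) (hd : 3 ≤ d) (hr : 2 ≤ r) (ε : ℝ)
    (hε0 : 0 < ε) (hε : ε < 1 / (2 * Real.sqrt 2 * ((d : ℝ) - 2)))
    (f : Fin (d + 1) → Fin r → ℝ)
    (hval : ∀ i j, f i j = 1 ∨ f i j = -1)
    (hone : ∀ i, ∃! j, f i j = -1) :
    ∃ j j' : Fin r, j ≠ j' ∧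
      Disjoint (simplexOf d ε (fun i => f i j)) (simplexOf d ε (fun i => f i j')) := by
  have hd2 : (0 : ℝ) < (d : ℝ) - 2 := by
    have : (3 : ℝ) ≤ (d : ℝ) := by exact_mod_cast hd
    linarith
  have hsqrt : (1 : ℝ) ≤ Real.sqrt 2 := by
    rw [show (1 : ℝ) = Real.sqrt 1 by simp]
    exact Real.sqrt_le_sqrt (by norm_num)
  have hq : (0 : ℝ) < 2 * Real.sqrt 2 * ((d : ℝ) - 2) := by positivity
  have hεd : ε * ((d : ℝ) - 2) < 1 := by
    have h1 : ε * (2 * Real.sqrt 2 * ((d : ℝ) - 2)) < 1 := by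
      rw [lt_div_iff₀ hq] at hε
      linarith
    nlinarith
  obtain ⟨j0, hj0, hj0u⟩ := hone 0
  obtain ⟨j1, hj1, hj1u⟩ := hone 1
  obtain ⟨jd, hjd, hjdu⟩ := hone (Fin.last d)
  have hv0 : ∀ j, j ≠ j0 → f 0 j = 1 := fun j hj => by
    rcases hval 0 j with h | h
    · exact h
    · exact absurd (hj0u j h) hj
  have hv1 : ∀ j, j ≠ j1 → f 1 j = 1 := fun j hj => by
    rcases hval 1 j with h | h
    · exact h
    · exact absurd (hj1u j h) hj
  have hvd : ∀ j, j ≠ jd → f (Fin.last d) j = 1 := fun j hj => by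
    rcases hval (Fin.last d) j with h | h
    · exact h
    · exact absurd (hjdu j h) hj
  by_cases h01 : j0 = j1
  · by_cases h0d : j0 = jd
    · -- all three minus ones in column j0; pick any other column
      obtain ⟨j, hj⟩ : ∃ j : Fin r, j ≠ j0 := by
        by_cases hc : j0 = ⟨0, by omega⟩
        · exact ⟨⟨1, by omega⟩, by rw [hc]; simp [Fin.ext_iff]⟩
        · exact ⟨⟨0, by omega⟩, fun hh => hc hh.symm⟩
      have a1 : f 1 j0 = -1 := h01 ▸ hj1
      have ad : f (Fin.last d) j0 = -1 := h0d ▸ hjd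
      have b0 : f 0 j = 1 := hv0 j hj
      have b1 : f 1 j = 1 := hv1 j (fun hh => hj (hh.trans h01.symm))
      have bd : f (Fin.last d) j = 1 := hvd j (fun hh => hj (hh.trans h0d.symm))
      refine ⟨j0, j, fun hh => hj hh.symm, ?_⟩
      refine disj_neg_pos d hd ε hε0 hεd _ _ (fun i => hval i j0) (fun i => hval i j) ?_ ?_ ?_
      · show f 0 j0 + f (Fin.last d) j0 * f 1 j0 = 0
        rw [hj0, a1, ad]; norm_num
      · show f (Fin.last d) j = -(f (Fin.last d) j0)
        rw [bd, ad]; norm_num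
      · show -(f 0 j0) * (f 0 j + f (Fin.last d) j * f 1 j) = 2
        rw [hj0, b0, b1, bd]; norm_num
    · -- j0 = j1 ≠ jd : small simplex at column jd, big at column j0
      have a0 : f 0 jd = 1 := hv0 jd (fun hh => h0d hh.symm)
      have a1 : f 1 jd = 1 := hv1 jd (fun hh => h0d (h01.trans hh.symm))
      have b1 : f 1 j0 = -1 := h01 ▸ hj1
      have bd : f (Fin.last d) j0 = 1 := hvd j0 h0d
      refine ⟨jd, j0, fun hh => h0d hh.symm, ?_⟩
      refine disj_neg_pos d hd ε hε0 hεd _ _ (fun i => hval i jd) (fun i => hval i j0) ?_ ?_ ?_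
      · show f 0 jd + f (Fin.last d) jd * f 1 jd = 0
        rw [a0, a1, hjd]; norm_num
      · show f (Fin.last d) j0 = -(f (Fin.last d) jd)
        rw [bd, hjd]; norm_num
      · show -(f 0 jd) * (f 0 j0 + f (Fin.last d) j0 * f 1 j0) = 2
        rw [a0, hj0, b1, bd]; norm_num
  · by_cases h0d : j0 = jd
    · -- j0 = jd ≠ j1 : small simplex at column j1, big at column j0
      have a0 : f 0 j1 = 1 := hv0 j1 (fun hh => h01 hh.symm)
      have ad : f (Fin.last d) j1 = 1 := hvd j1 (fun hh => h01 (h0d.trans hh.symm))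
      have b1 : f 1 j0 = 1 := hv1 j0 h01
      have bd : f (Fin.last d) j0 = -1 := h0d ▸ hjd
      refine ⟨j1, j0, fun hh => h01 hh.symm, ?_⟩
      refine disj_neg_pos d hd ε hε0 hεd _ _ (fun i => hval i j1) (fun i => hval i j0) ?_ ?_ ?_
      · show f 0 j1 + f (Fin.last d) j1 * f 1 j1 = 0
        rw [a0, ad, hj1]; norm_num
      · show f (Fin.last d) j0 = -(f (Fin.last d) j1)
        rw [bd, ad]
      · show -(f 0 j1) * (f 0 j0 + f (Fin.last d) j0 * f 1 j0) = 2
        rw [a0, hj0, b1, bd]; norm_num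
    · by_cases h1d : j1 = jd
      · -- j1 = jd ≠ j0 : small simplex at column j0, big at column j1
        have a1 : f 1 j0 = 1 := hv1 j0 h01
        have ad : f (Fin.last d) j0 = 1 := hvd j0 h0d
        have b0 : f 0 j1 = 1 := hv0 j1 (fun hh => h01 hh.symm)
        have bd : f (Fin.last d) j1 = -1 := h1d ▸ hjd
        refine ⟨j0, j1, h01, ?_⟩
        refine disj_neg_pos d hd ε hε0 hεd _ _ (fun i => hval i j0) (fun i => hval i j1) ?_ ?_ ?_
        · show f 0 j0 + f (Fin.last d) j0 * f 1 j0 = 0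
          rw [hj0, a1, ad]; norm_num
        · show f (Fin.last d) j1 = -(f (Fin.last d) j0)
          rw [bd, ad]
        · show -(f 0 j0) * (f 0 j1 + f (Fin.last d) j1 * f 1 j1) = 2
          rw [hj0, b0, bd, hj1]; norm_num
      · -- all distinct : two small simplices at columns j0 and j1
        have a1 : f 1 j0 = 1 := hv1 j0 h01
        have ad : f (Fin.last d) j0 = 1 := hvd j0 h0d
        have b0 : f 0 j1 = 1 := hv0 j1 (fun hh => h01 hh.symm)
        have bd : f (Fin.last d) j1 = 1 := hvd j1 h1d
        refine ⟨j0, j1, h01, ?_⟩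
        refine disj_neg_neg d hd ε hε0 hεd _ _ (fun i => hval i j0) (fun i => hval i j1)
          ?_ ?_ ?_ ?_
        · show f 0 j0 + f (Fin.last d) j0 * f 1 j0 = 0
          rw [hj0, a1, ad]; norm_num
        · show f 0 j1 + f (Fin.last d) j1 * f 1 j1 = 0
          rw [b0, bd, hj1]; norm_num
        · show f (Fin.last d) j1 = f (Fin.last d) j0
          rw [bd, ad]
        · show f 0 j1 = -(f 0 j0)
          rw [b0, hj0]; norm_num
end

section
/- Let d ≥ 3 and r ≥ 2 be integers and let ε be a real number with 0 < ε < 1/(2√2·(d−2)). Let Π : ℝ^d → ℝ² denote the projection onto the first two coordinates, Π(x) = (x₁, x₂). For all functions f₁, …, f_{d+1} : Fin r → {-1, 1}, each taking the value −1 at exactly one index, there exist indices j ≠ j' in Fin r such that the planar sets Π(Δ_ε(f₁ j, …, f_{d+1} j)) and Π(Δ_ε(f₁ j', …, f_{d+1} j')) are disjoint. -/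
lemma mem_hyp_lt {d : ℕ} {ε : ℝ} {lam : Fin (d+1) → ℝ} {x : Fin d → ℝ} {i : Fin (d+1)}
    (h : (i : ℕ) < d) (hx : x ∈ hyperplaneOf d ε lam i) : x ⟨i, h⟩ = lam i := by
  rw [hyperplaneOf, dif_pos h] at hx; exact hx

lemma mem_hyp_last {d : ℕ} {ε : ℝ} {lam : Fin (d+1) → ℝ} {x : Fin d → ℝ}
    (hx : x ∈ hyperplaneOf d ε lam ⟨d, by omega⟩) :
    ∑ m : Fin d, (if (m : ℕ) = 0 then 1 else if (m : ℕ) = 1 then lam ⟨d, by omega⟩ else ε) * x m = 0 := by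
  rw [hyperplaneOf, dif_neg (by simp)] at hx; exact hx

lemma sum_split {d : ℕ} (hd : 3 ≤ d) (t ε : ℝ) (x : Fin d → ℝ) :
    ∑ m : Fin d, (if (m : ℕ) = 0 then 1 else if (m : ℕ) = 1 then t else ε) * x m
      = x ⟨0, by omega⟩ + t * x ⟨1, by omega⟩
        + ε * ∑ m ∈ ({⟨0, by omega⟩, ⟨1, by omega⟩} : Finset (Fin d))ᶜ, x m := by
  classical
  have h01 : (⟨0, by omega⟩ : Fin d) ≠ ⟨1, by omega⟩ := by simp [Fin.ext_iff]
  rw [← Finset.sum_compl_add_sum ({⟨0, by omega⟩, ⟨1, by omega⟩} : Finset (Fin d))]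
  rw [Finset.sum_pair h01]
  have hc : ∀ m ∈ (({⟨0, by omega⟩, ⟨1, by omega⟩} : Finset (Fin d)))ᶜ,
      (if (m : ℕ) = 0 then (1:ℝ) else if (m : ℕ) = 1 then t else ε) * x m = ε * x m := by
    intro m hm
    simp only [Finset.mem_compl, Finset.mem_insert, Finset.mem_singleton, not_or, Fin.ext_iff] at hm
    simp [hm.1, hm.2]
  rw [Finset.sum_congr rfl hc, ← Finset.mul_sum]
  simp only [Fin.val_mk]
  norm_num
  ring



lemma gen_cases {d : ℕ} (hd : 3 ≤ d) {ε : ℝ} {lam : Fin (d+1) → ℝ}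
    (hval : ∀ i, lam i = 1 ∨ lam i = -1) (x : Fin d → ℝ) (k : Fin (d+1))
    (hx : ∀ i, i ≠ k → x ∈ hyperplaneOf d ε lam i) :
    (x ⟨0, by omega⟩ = lam ⟨0, by omega⟩ ∧ x ⟨1, by omega⟩ = lam ⟨1, by omega⟩) ∨
    (∃ T : ℝ, |T| ≤ (d : ℝ) - 2 ∧ x ⟨1, by omega⟩ = lam ⟨1, by omega⟩ ∧
        x ⟨0, by omega⟩ + lam ⟨d, by omega⟩ * lam ⟨1, by omega⟩ + ε * T = 0) ∨
    (∃ T : ℝ, |T| ≤ (d : ℝ) - 2 ∧ x ⟨0, by omega⟩ = lam ⟨0, by omega⟩ ∧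
        lam ⟨0, by omega⟩ + lam ⟨d, by omega⟩ * x ⟨1, by omega⟩ + ε * T = 0) := by
  classical
  -- a generic: if k is 0 or 1, middle coordinates equal lam, and sum identity holds
  have hmid : ((k : ℕ) = 0 ∨ (k : ℕ) = 1) →
      |∑ m ∈ ({⟨0, by omega⟩, ⟨1, by omega⟩} : Finset (Fin d))ᶜ, x m| ≤ (d : ℝ) - 2 := by
    intro hk01
    have hb : ∀ m ∈ ({⟨0, by omega⟩, ⟨1, by omega⟩} : Finset (Fin d))ᶜ, |x m| ≤ (1:ℝ) := by
      intro m hm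
      simp only [Finset.mem_compl, Finset.mem_insert, Finset.mem_singleton, not_or,
        Fin.ext_iff] at hm
      have h2 : 2 ≤ (m : ℕ) := by omega
      have hik : (⟨(m : ℕ), by omega⟩ : Fin (d+1)) ≠ k :=
        Fin.ne_of_val_ne (show (m : ℕ) ≠ (k : ℕ) by omega)
      have := mem_hyp_lt (i := ⟨(m : ℕ), by omega⟩) m.isLt (hx _ hik)
      rw [show (⟨(m : ℕ), m.isLt⟩ : Fin d) = m from rfl] at this
      rw [this]
      rcases hval ⟨(m : ℕ), by omega⟩ with h | h <;> simp [h]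
    calc |∑ m ∈ ({⟨0, by omega⟩, ⟨1, by omega⟩} : Finset (Fin d))ᶜ, x m|
        ≤ ∑ m ∈ ({⟨0, by omega⟩, ⟨1, by omega⟩} : Finset (Fin d))ᶜ, |x m| :=
          Finset.abs_sum_le_sum_abs _ _
      _ ≤ ∑ _m ∈ ({⟨0, by omega⟩, ⟨1, by omega⟩} : Finset (Fin d))ᶜ, (1:ℝ) :=
          Finset.sum_le_sum hb
      _ = ((({⟨0, by omega⟩, ⟨1, by omega⟩} : Finset (Fin d))ᶜ.card : ℕ) : ℝ) := by simp
      _ = (d : ℝ) - 2 := by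
          rw [Finset.card_compl, Finset.card_pair (by simp [Fin.ext_iff]), Fintype.card_fin,
            Nat.cast_sub (by omega)]
          norm_num
  have hsum : k ≠ ⟨d, by omega⟩ →
      x ⟨0, by omega⟩ + lam ⟨d, by omega⟩ * x ⟨1, by omega⟩
        + ε * ∑ m ∈ ({⟨0, by omega⟩, ⟨1, by omega⟩} : Finset (Fin d))ᶜ, x m = 0 := by
    intro hk
    have := mem_hyp_last (hx ⟨d, by omega⟩ (Ne.symm hk))
    rwa [sum_split hd] at this
  by_cases hk0 : k = (⟨0, by omega⟩ : Fin (d+1))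
  · right; left
    have hk1 : (⟨1, by omega⟩ : Fin (d+1)) ≠ k := by
      rw [hk0]; exact Fin.ne_of_val_ne (show (1:ℕ) ≠ 0 by omega)
    have h1 : x ⟨1, by omega⟩ = lam ⟨1, by omega⟩ := mem_hyp_lt (show (1:ℕ) < d by omega) (hx _ hk1)
    refine ⟨_, hmid (Or.inl (by rw [hk0])), h1, ?_⟩
    have := hsum (by rw [hk0]; exact Fin.ne_of_val_ne (show (0:ℕ) ≠ d by omega))
    rw [h1] at this
    exact this
  · by_cases hk1 : k = (⟨1, by omega⟩ : Fin (d+1))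
    · right; right
      have hk0' : (⟨0, by omega⟩ : Fin (d+1)) ≠ k := by
        rw [hk1]; exact Fin.ne_of_val_ne (show (0:ℕ) ≠ 1 by omega)
      have h0 : x ⟨0, by omega⟩ = lam ⟨0, by omega⟩ := mem_hyp_lt (show (0:ℕ) < d by omega) (hx _ hk0')
      refine ⟨_, hmid (Or.inr (by rw [hk1])), h0, ?_⟩
      have := hsum (by rw [hk1]; exact Fin.ne_of_val_ne (show (1:ℕ) ≠ d by omega))
      rw [h0] at this
      exact this
    · left
      exact ⟨mem_hyp_lt (show (0:ℕ) < d by omega) (hx _ fun h => hk0 h.symm),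
        mem_hyp_lt (show (1:ℕ) < d by omega) (hx _ fun h => hk1 h.symm)⟩

lemma abs_combo {p q u v a δ : ℝ} (hp : 0 ≤ p) (hq : 0 ≤ q) (hpq : p + q = 1)
    (hu : |u - a| ≤ δ) (hv : |v - a| ≤ δ) : |p * u + q * v - a| ≤ δ := by
  have h : p * u + q * v - a = p * (u - a) + q * (v - a) := by linear_combination a * hpq
  calc |p * u + q * v - a| = |p * (u - a) + q * (v - a)| := by rw [h]
    _ ≤ |p * (u - a)| + |q * (v - a)| := abs_add_le _ _
    _ = p * |u - a| + q * |v - a| := by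
        rw [abs_mul, abs_mul, abs_of_nonneg hp, abs_of_nonneg hq]
    _ ≤ p * δ + q * δ :=
        add_le_add (mul_le_mul_of_nonneg_left hu hp) (mul_le_mul_of_nonneg_left hv hq)
    _ = δ := by rw [← add_mul, hpq, one_mul]

lemma simplexOf_subset {d : ℕ} {ε : ℝ} {lam : Fin (d+1) → ℝ} (C : Set (Fin d → ℝ))
    (hC : Convex ℝ C)
    (h : ∀ x (k : Fin (d+1)), (∀ i, i ≠ k → x ∈ hyperplaneOf d ε lam i) → x ∈ C) :
    simplexOf d ε lam ⊆ C :=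
  convexHull_min (fun x hx => by obtain ⟨k, hk⟩ := hx; exact h x k hk) hC

lemma small_bound {d : ℕ} (hd : 3 ≤ d) {ε : ℝ} (hε0 : 0 < ε) {lam : Fin (d+1) → ℝ}
    (hval : ∀ i, lam i = 1 ∨ lam i = -1)
    (hsmall : lam ⟨0, by omega⟩ * lam ⟨1, by omega⟩ * lam ⟨d, by omega⟩ = -1) :
    simplexOf d ε lam ⊆
      {x : Fin d → ℝ | |x ⟨0, by omega⟩ - lam ⟨0, by omega⟩| ≤ ε * ((d : ℝ) - 2) ∧
        |x ⟨1, by omega⟩ - lam ⟨1, by omega⟩| ≤ ε * ((d : ℝ) - 2)} := by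
  have hdR : (3 : ℝ) ≤ (d : ℝ) := by exact_mod_cast hd
  have hδ : 0 ≤ ε * ((d : ℝ) - 2) := mul_nonneg hε0.le (by linarith)
  apply simplexOf_subset
  · intro x hx y hy p q hp hq hpq
    simp only [Set.mem_setOf_eq, Pi.add_apply, Pi.smul_apply, smul_eq_mul] at *
    exact ⟨abs_combo hp hq hpq hx.1 hy.1, abs_combo hp hq hpq hx.2 hy.2⟩
  · intro x k hx
    have h00 : lam ⟨0, by omega⟩ * lam ⟨0, by omega⟩ = 1 := by
      rcases hval ⟨0, by omega⟩ with h | h <;> rw [h] <;> norm_num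
    have h11 : lam ⟨1, by omega⟩ * lam ⟨1, by omega⟩ = 1 := by
      rcases hval ⟨1, by omega⟩ with h | h <;> rw [h] <;> norm_num
    have hdd : lam ⟨d, by omega⟩ * lam ⟨d, by omega⟩ = 1 := by
      rcases hval ⟨d, by omega⟩ with h | h <;> rw [h] <;> norm_num
    rcases gen_cases hd hval x k hx with ⟨h0, h1⟩ | ⟨T, hT, h1, heq⟩ | ⟨T, hT, h0, heq⟩
    · constructor <;> simp [h0, h1, hδ]
    · have hprod : lam ⟨d, by omega⟩ * lam ⟨1, by omega⟩ = -lam ⟨0, by omega⟩ := by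
        linear_combination lam ⟨0, by omega⟩ * hsmall
          - (lam ⟨1, by omega⟩ * lam ⟨d, by omega⟩) * h00
      constructor
      · have hx0 : x ⟨0, by omega⟩ - lam ⟨0, by omega⟩ = -(ε * T) := by
          linear_combination heq - hprod
        rw [hx0, abs_neg, abs_mul, abs_of_nonneg hε0.le]
        exact mul_le_mul_of_nonneg_left hT hε0.le
      · simp [h1, hδ]
    · have hprod2 : lam ⟨d, by omega⟩ * lam ⟨0, by omega⟩ = -lam ⟨1, by omega⟩ := by
        linear_combination lam ⟨1, by omega⟩ * hsmall
          - (lam ⟨0, by omega⟩ * lam ⟨d, by omega⟩) * h11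
      have habs : |lam ⟨d, by omega⟩| = 1 := by
        rcases hval ⟨d, by omega⟩ with h | h <;> rw [h] <;> norm_num
      constructor
      · simp [h0, hδ]
      · have hx1 : x ⟨1, by omega⟩ - lam ⟨1, by omega⟩ = -(lam ⟨d, by omega⟩ * (ε * T)) := by
          linear_combination lam ⟨d, by omega⟩ * heq - hprod2 - x ⟨1, by omega⟩ * hdd
        rw [hx1, abs_neg, abs_mul, habs, one_mul, abs_mul, abs_of_nonneg hε0.le]
        exact mul_le_mul_of_nonneg_left hT hε0.le

lemma big_bound {d : ℕ} (hd : 3 ≤ d) {ε : ℝ} (hε0 : 0 < ε) {lam : Fin (d+1) → ℝ}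
    (hval : ∀ i, lam i = 1 ∨ lam i = -1)
    (hbig : lam ⟨0, by omega⟩ * lam ⟨1, by omega⟩ * lam ⟨d, by omega⟩ = 1) :
    simplexOf d ε lam ⊆
      {x : Fin d → ℝ | -(ε * ((d : ℝ) - 2)) ≤
        lam ⟨0, by omega⟩ * x ⟨0, by omega⟩ + lam ⟨1, by omega⟩ * x ⟨1, by omega⟩} := by
  have hdR : (3 : ℝ) ≤ (d : ℝ) := by exact_mod_cast hd
  have hδ : 0 ≤ ε * ((d : ℝ) - 2) := mul_nonneg hε0.le (by linarith)
  apply simplexOf_subset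
  · intro x hx y hy p q hp hq hpq
    simp only [Set.mem_setOf_eq, Pi.add_apply, Pi.smul_apply, smul_eq_mul] at *
    nlinarith [mul_le_mul_of_nonneg_left hx hp, mul_le_mul_of_nonneg_left hy hq]
  · intro x k hx
    have h00 : lam ⟨0, by omega⟩ * lam ⟨0, by omega⟩ = 1 := by
      rcases hval ⟨0, by omega⟩ with h | h <;> rw [h] <;> norm_num
    have h11 : lam ⟨1, by omega⟩ * lam ⟨1, by omega⟩ = 1 := by
      rcases hval ⟨1, by omega⟩ with h | h <;> rw [h] <;> norm_num
    have hdd : lam ⟨d, by omega⟩ * lam ⟨d, by omega⟩ = 1 := by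
      rcases hval ⟨d, by omega⟩ with h | h <;> rw [h] <;> norm_num
    have hprodb : lam ⟨d, by omega⟩ * lam ⟨1, by omega⟩ = lam ⟨0, by omega⟩ := by
      linear_combination lam ⟨0, by omega⟩ * hbig
        - (lam ⟨1, by omega⟩ * lam ⟨d, by omega⟩) * h00
    have hprodb2 : lam ⟨d, by omega⟩ * lam ⟨0, by omega⟩ = lam ⟨1, by omega⟩ := by
      linear_combination lam ⟨1, by omega⟩ * hbig
        - (lam ⟨0, by omega⟩ * lam ⟨d, by omega⟩) * h11
    simp only [Set.mem_setOf_eq]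
    rcases gen_cases hd hval x k hx with ⟨h0, h1⟩ | ⟨T, hT, h1, heq⟩ | ⟨T, hT, h0, heq⟩
    · rw [h0, h1]; linarith [h00, h11]
    · obtain ⟨hT2, hT1⟩ := abs_le.mp hT
      have hεT1 : ε * T ≤ ε * ((d : ℝ) - 2) := mul_le_mul_of_nonneg_left hT1 hε0.le
      have hεT2 : -(ε * ((d : ℝ) - 2)) ≤ ε * T := by
        have := mul_le_mul_of_nonneg_left hT2 hε0.le
        nlinarith
      have hx0 : x ⟨0, by omega⟩ = -lam ⟨0, by omega⟩ - ε * T := by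
        linear_combination heq - hprodb
      rw [hx0, h1]
      have goal_eq : lam ⟨0, by omega⟩ * (-lam ⟨0, by omega⟩ - ε * T)
          + lam ⟨1, by omega⟩ * lam ⟨1, by omega⟩ = -(lam ⟨0, by omega⟩ * (ε * T)) := by
        linear_combination h11 - h00
      rw [goal_eq]
      rcases hval ⟨0, by omega⟩ with h | h <;> rw [h] <;> linarith
    · obtain ⟨hT2, hT1⟩ := abs_le.mp hT
      have hεT1 : ε * T ≤ ε * ((d : ℝ) - 2) := mul_le_mul_of_nonneg_left hT1 hε0.le
      have hεT2 : -(ε * ((d : ℝ) - 2)) ≤ ε * T := by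
        have := mul_le_mul_of_nonneg_left hT2 hε0.le
        nlinarith
      have hx1 : x ⟨1, by omega⟩ = -lam ⟨1, by omega⟩ - lam ⟨d, by omega⟩ * (ε * T) := by
        linear_combination lam ⟨d, by omega⟩ * heq - hprodb2 - x ⟨1, by omega⟩ * hdd
      rw [hx1, h0]
      have goal_eq : lam ⟨0, by omega⟩ * lam ⟨0, by omega⟩
          + lam ⟨1, by omega⟩ * (-lam ⟨1, by omega⟩ - lam ⟨d, by omega⟩ * (ε * T))
          = -(lam ⟨0, by omega⟩ * (ε * T)) := by
        linear_combination h00 - h11 - (ε * T) * hprodb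
      rw [goal_eq]
      rcases hval ⟨0, by omega⟩ with h | h <;> rw [h] <;> linarith

lemma disjA {d : ℕ} (hd : 3 ≤ d) {ε : ℝ} (hε0 : 0 < ε) (hδ2 : ε * ((d : ℝ) - 2) < 1 / 2)
    {lam mu : Fin (d+1) → ℝ}
    (hvl : ∀ i, lam i = 1 ∨ lam i = -1) (hvm : ∀ i, mu i = 1 ∨ mu i = -1)
    (hsl : lam ⟨0, by omega⟩ * lam ⟨1, by omega⟩ * lam ⟨d, by omega⟩ = -1)
    (hsm : mu ⟨0, by omega⟩ * mu ⟨1, by omega⟩ * mu ⟨d, by omega⟩ = -1)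
    (h0 : mu ⟨0, by omega⟩ = -lam ⟨0, by omega⟩) :
    Disjoint
      ((fun x : Fin d → ℝ => (x ⟨0, by omega⟩, x ⟨1, by omega⟩)) '' simplexOf d ε lam)
      ((fun x : Fin d → ℝ => (x ⟨0, by omega⟩, x ⟨1, by omega⟩)) '' simplexOf d ε mu) := by
  rw [Set.disjoint_left]
  rintro p ⟨x, hx, rfl⟩ ⟨y, hy, hxy⟩
  obtain ⟨he0, he1⟩ := Prod.ext_iff.mp hxy
  replace he0 : y ⟨0, by omega⟩ = x ⟨0, by omega⟩ := he0
  replace he1 : y ⟨1, by omega⟩ = x ⟨1, by omega⟩ := he1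
  have hbx := (small_bound hd hε0 hvl hsl hx).1
  have hby := (small_bound hd hε0 hvm hsm hy).1
  rw [he0, h0] at hby
  obtain ⟨ha1, ha2⟩ := abs_le.mp hbx
  obtain ⟨hb1, hb2⟩ := abs_le.mp hby
  rcases hvl ⟨0, by omega⟩ with h | h <;> rw [h] at ha1 ha2 hb1 hb2 <;> linarith

lemma disjB {d : ℕ} (hd : 3 ≤ d) {ε : ℝ} (hε0 : 0 < ε) (hδ2 : ε * ((d : ℝ) - 2) < 1 / 2)
    {lam mu : Fin (d+1) → ℝ}
    (hvl : ∀ i, lam i = 1 ∨ lam i = -1) (hvm : ∀ i, mu i = 1 ∨ mu i = -1)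
    (hbl : lam ⟨0, by omega⟩ * lam ⟨1, by omega⟩ * lam ⟨d, by omega⟩ = 1)
    (hsm : mu ⟨0, by omega⟩ * mu ⟨1, by omega⟩ * mu ⟨d, by omega⟩ = -1)
    (h0 : mu ⟨0, by omega⟩ = -lam ⟨0, by omega⟩)
    (h1 : mu ⟨1, by omega⟩ = -lam ⟨1, by omega⟩) :
    Disjoint
      ((fun x : Fin d → ℝ => (x ⟨0, by omega⟩, x ⟨1, by omega⟩)) '' simplexOf d ε lam)
      ((fun x : Fin d → ℝ => (x ⟨0, by omega⟩, x ⟨1, by omega⟩)) '' simplexOf d ε mu) := by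
  rw [Set.disjoint_left]
  rintro p ⟨x, hx, rfl⟩ ⟨y, hy, hxy⟩
  obtain ⟨he0, he1⟩ := Prod.ext_iff.mp hxy
  replace he0 : y ⟨0, by omega⟩ = x ⟨0, by omega⟩ := he0
  replace he1 : y ⟨1, by omega⟩ = x ⟨1, by omega⟩ := he1
  have hbx := big_bound hd hε0 hvl hbl hx
  have hby := small_bound hd hε0 hvm hsm hy
  rw [Set.mem_setOf_eq, ← he0, ← he1] at hbx
  obtain ⟨hb0, hb1⟩ := hby
  rw [h0] at hb0
  rw [h1] at hb1
  obtain ⟨hb01, hb02⟩ := abs_le.mp hb0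
  obtain ⟨hb11, hb12⟩ := abs_le.mp hb1
  rcases hvl ⟨0, by omega⟩ with h | h <;> rw [h] at hbx hb01 hb02 <;>
    rcases hvl ⟨1, by omega⟩ with h' | h' <;> rw [h'] at hbx hb11 hb12 <;> nlinarith


/-- For `d ≥ 3`, `r ≥ 2` and `0 < ε < 1/(2√2 (d-2))`, every colorful partition of the
`d+1` families of `r` hyperplanes has two parts whose induced simplices have disjoint
projections `Π(x) = (x₁, x₂)` onto the first two coordinates. -/
theorem stmt3 (d r : ℕ) (hd : 3 ≤ d) (hr : 2 ≤ r) (ε : ℝ)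
    (hε0 : 0 < ε) (hε : ε < 1 / (2 * Real.sqrt 2 * ((d : ℝ) - 2)))
    (f : Fin (d + 1) → Fin r → ℝ)
    (hval : ∀ i j, f i j = 1 ∨ f i j = -1)
    (hone : ∀ i, ∃! j, f i j = -1) :
    ∃ j j' : Fin r, j ≠ j' ∧
      Disjoint
        ((fun x : Fin d → ℝ => (x ⟨0, by omega⟩, x ⟨1, by omega⟩)) ''
          simplexOf d ε (fun i => f i j))
        ((fun x : Fin d → ℝ => (x ⟨0, by omega⟩, x ⟨1, by omega⟩)) ''
          simplexOf d ε (fun i => f i j')) := by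
  have hdR : (3 : ℝ) ≤ (d : ℝ) := by exact_mod_cast hd
  have hs2 : (1 : ℝ) ≤ Real.sqrt 2 := by
    nlinarith [Real.sq_sqrt (show (0:ℝ) ≤ 2 by norm_num), Real.sqrt_nonneg 2]
  have hδ2 : ε * ((d : ℝ) - 2) < 1 / 2 := by
    have hpos : (0:ℝ) < (d : ℝ) - 2 := by linarith
    have h1 : ε * ((d : ℝ) - 2) < (1 / (2 * Real.sqrt 2 * ((d : ℝ) - 2))) * ((d : ℝ) - 2) :=
      mul_lt_mul_of_pos_right hε hpos
    have h2 : (1 / (2 * Real.sqrt 2 * ((d : ℝ) - 2))) * ((d : ℝ) - 2)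
        = 1 / (2 * Real.sqrt 2) := by
      field_simp
    have h3 : 1 / (2 * Real.sqrt 2) ≤ 1 / 2 := by
      apply one_div_le_one_div_of_le (by norm_num)
      nlinarith
    linarith
  obtain ⟨a, ha, hau⟩ := hone ⟨0, by omega⟩
  obtain ⟨b, hb, hbu⟩ := hone ⟨1, by omega⟩
  obtain ⟨c, hc, hcu⟩ := hone ⟨d, by omega⟩
  have hpos' : ∀ (i : Fin (d+1)) (u j : Fin r), (∀ y, f i y = -1 → y = u) → j ≠ u →
      f i j = 1 := by
    intro i u j hu hj
    rcases hval i j with h | h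
    · exact h
    · exact absurd (hu j h) hj
  by_cases hab : a = b
  · by_cases hac : a = c
    · -- a = b = c : small at a, big at any j' ≠ a
      have hj' : ∃ j' : Fin r, j' ≠ a := by
        by_cases h : a = ⟨0, by omega⟩
        · exact ⟨⟨1, by omega⟩, by rw [h]; exact Fin.ne_of_val_ne (show (1:ℕ) ≠ 0 by omega)⟩
        · exact ⟨⟨0, by omega⟩, fun hh => h hh.symm⟩
      obtain ⟨j', hj'⟩ := hj'
      have vj0 : f ⟨0, by omega⟩ j' = 1 := hpos' _ a j' hau hj'
      have vj1 : f ⟨1, by omega⟩ j' = 1 := hpos' _ b j' hbu (hab ▸ hj')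
      have vjd : f ⟨d, by omega⟩ j' = 1 := hpos' _ c j' hcu (hac ▸ hj')
      have va1 : f ⟨1, by omega⟩ a = -1 := by rw [hab]; exact hb
      have vad : f ⟨d, by omega⟩ a = -1 := by rw [hac]; exact hc
      refine ⟨j', a, hj', ?_⟩
      refine disjB hd hε0 hδ2 (fun i => hval i j') (fun i => hval i a) ?_ ?_ ?_ ?_
      · rw [vj0, vj1, vjd]; try norm_num
      · rw [ha, va1, vad]; try norm_num
      · rw [ha, vj0]; try norm_num
      · rw [va1, vj1]; try norm_num
    · -- a = b ≠ c : big at a (-1,-1,1), small at c (1,1,-1)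
      have va1 : f ⟨1, by omega⟩ a = -1 := by rw [hab]; exact hb
      have vad : f ⟨d, by omega⟩ a = 1 := hpos' _ c a hcu hac
      have vc0 : f ⟨0, by omega⟩ c = 1 := hpos' _ a c hau (fun h => hac h.symm)
      have vc1 : f ⟨1, by omega⟩ c = 1 :=
        hpos' _ b c hbu (fun h => hac (hab.trans h.symm))
      refine ⟨a, c, hac, ?_⟩
      refine disjB hd hε0 hδ2 (fun i => hval i a) (fun i => hval i c) ?_ ?_ ?_ ?_
      · rw [ha, va1, vad]; try norm_num
      · rw [vc0, vc1, hc]; try norm_num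
      · rw [vc0, ha]; try norm_num
      · rw [vc1, va1]; try norm_num
  · by_cases hbc : b = c
    · -- b = c ≠ a : big at b (1,-1,-1), small at a (-1,1,1)
      have hba : b ≠ a := fun h => hab h.symm
      have vb0 : f ⟨0, by omega⟩ b = 1 := hpos' _ a b hau hba
      have vbd : f ⟨d, by omega⟩ b = -1 := by rw [hbc]; exact hc
      have va1 : f ⟨1, by omega⟩ a = 1 := hpos' _ b a hbu hab
      have vad : f ⟨d, by omega⟩ a = 1 :=
        hpos' _ c a hcu (fun h => hab (h.trans hbc.symm))
      refine ⟨b, a, hba, ?_⟩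
      refine disjB hd hε0 hδ2 (fun i => hval i b) (fun i => hval i a) ?_ ?_ ?_ ?_
      · rw [vb0, hb, vbd]; try norm_num
      · rw [ha, va1, vad]; try norm_num
      · rw [ha, vb0]; try norm_num
      · rw [va1, hb]; try norm_num
    · by_cases hac : a = c
      · -- a = c ≠ b : big at a (-1,1,-1), small at b (1,-1,1)
        have va1 : f ⟨1, by omega⟩ a = 1 := hpos' _ b a hbu hab
        have vad : f ⟨d, by omega⟩ a = -1 := by rw [hac]; exact hc
        have vb0 : f ⟨0, by omega⟩ b = 1 := hpos' _ a b hau (fun h => hab h.symm)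
        have vbd : f ⟨d, by omega⟩ b = 1 := hpos' _ c b hcu hbc
        refine ⟨a, b, hab, ?_⟩
        refine disjB hd hε0 hδ2 (fun i => hval i a) (fun i => hval i b) ?_ ?_ ?_ ?_
        · rw [ha, va1, vad]; try norm_num
        · rw [vb0, hb, vbd]; try norm_num
        · rw [vb0, ha]; try norm_num
        · rw [hb, va1]; try norm_num
      · -- all distinct : small at a (-1,1,1), small at b (1,-1,1)
        have va1 : f ⟨1, by omega⟩ a = 1 := hpos' _ b a hbu hab
        have vad : f ⟨d, by omega⟩ a = 1 := hpos' _ c a hcu hac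
        have vb0 : f ⟨0, by omega⟩ b = 1 := hpos' _ a b hau (fun h => hab h.symm)
        have vbd : f ⟨d, by omega⟩ b = 1 := hpos' _ c b hcu hbc
        refine ⟨a, b, hab, ?_⟩
        refine disjA hd hε0 hδ2 (fun i => hval i a) (fun i => hval i b) ?_ ?_ ?_
        · rw [ha, va1, vad]; try norm_num
        · rw [vb0, hb, vbd]; try norm_num
        · rw [vb0, ha]; try norm_num
end
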